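/- arXiv:2401.17555 — 3 statements merged into one kernel-verified Lean document; each statement's English description precedes it below -/
import Mathlib

section
/- Let R, L, C, B, S be real numbers with C > 0, R + L > C, S > C and B + C > 0. Then the verification game has no pure-strategy Nash equilibrium: none of the four pure profiles (q_v, q_c) ∈ {0,1} × {0,1} satisfies the Nash equilibrium conditions U_V(q_v, q_c) ≥ U_V(q_v', q_c) for all q_v' ∈ [0,1] and U_S(q_v, q_c) ≥ U_S(q_v, q_c') for all q_c' ∈ [0,1]. -/
/-- Validator's expected utility in the verification game. -/
def U_V (R L C : ℝ) (q_v q_c : ℝ) : ℝ :=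
  q_v * (q_c * (R - C) + (1 - q_c) * (-C)) + (1 - q_v) * (q_c * (-L))

/-- Submitter's expected utility in the verification game. -/
def U_S (B S C : ℝ) (q_v q_c : ℝ) : ℝ :=
  q_c * (q_v * (-S) + (1 - q_v) * B) + (1 - q_c) * (-C)

/-- The verification game has no pure-strategy Nash equilibrium: none of the four pure
profiles `(q_v, q_c) ∈ {0,1} × {0,1}` satisfies the Nash equilibrium conditions. -/
theorem no_pure_nash_equilibrium (R L C B S : ℝ)
    (hC : 0 < C) (hRL : C < R + L) (hS : C < S) (hBC : 0 < B + C) :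
    ∀ q_v ∈ ({0, 1} : Set ℝ), ∀ q_c ∈ ({0, 1} : Set ℝ),
      ¬ ((∀ q_v' ∈ Set.Icc (0 : ℝ) 1, U_V R L C q_v' q_c ≤ U_V R L C q_v q_c) ∧
         (∀ q_c' ∈ Set.Icc (0 : ℝ) 1, U_S B S C q_v q_c' ≤ U_S B S C q_v q_c)) := by
  rintro q_v (rfl | rfl) q_c (rfl | rfl) ⟨hV, hSb⟩
  · have := hSb 1 ⟨zero_le_one, le_refl 1⟩
    simp [U_S] at this; linarith
  · have := hV 1 ⟨zero_le_one, le_refl 1⟩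
    simp [U_V] at this; linarith
  · have := hV 0 ⟨le_refl 0, zero_le_one⟩
    simp [U_V] at this; linarith
  · have := hSb 0 ⟨le_refl 0, zero_le_one⟩
    simp [U_S] at this; linarith
end

section
/- Let R, L, C, B, S be real numbers with R + L > 0, B + S > 0, C > 0 and B + C > 0. If the submitter cheats with probability q_c strictly less than C/(R + L), then not checking is the validator's strict best response: U_V(0, q_c) > U_V(q_v, q_c) for every q_v ∈ (0,1]. If q_c > C/(R + L), then checking with probability 1 is the validator's strict best response: U_V(1, q_c) > U_V(q_v, q_c) for every q_v ∈ [0,1). -/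
/-- The verifier's dilemma: if the submitter cheats with probability `q_c < C/(R+L)`,
not checking is the validator's strict best response; if `q_c > C/(R+L)`, always
checking is the validator's strict best response. -/
theorem verifier_dilemma (R L C B S : ℝ)
    (hRL : 0 < R + L) (hBS : 0 < B + S) (hC : 0 < C) (hBC : 0 < B + C)
    (q_c : ℝ) :
    (q_c < C / (R + L) → ∀ q_v ∈ Set.Ioc (0 : ℝ) 1, U_V R L C q_v q_c < U_V R L C 0 q_c) ∧
    (C / (R + L) < q_c → ∀ q_v ∈ Set.Ico (0 : ℝ) 1, U_V R L C q_v q_c < U_V R L C 1 q_c) := by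
  constructor
  · intro h q_v ⟨h0, h1⟩
    rw [lt_div_iff₀ hRL] at h
    simp only [U_V]
    nlinarith
  · intro h q_v ⟨h0, h1⟩
    rw [div_lt_iff₀ hRL] at h
    simp only [U_V]
    nlinarith
end

section
/- Let B, S, C be real numbers with B + S > 0 and B + C > 0. If the validator checks with probability q_v strictly greater than (B + C)/(B + S), then not cheating is the submitter's strict best response: U_S(q_v, 0) > U_S(q_v, q_c) for every q_c ∈ (0,1]. If q_v < (B + C)/(B + S), then cheating with probability 1 is the submitter's strict best response: U_S(q_v, 1) > U_S(q_v, q_c) for every q_c ∈ [0,1). -/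
/-- If the validator checks with probability `q_v > (B+C)/(B+S)`, not cheating is the
submitter's strict best response; if `q_v < (B+C)/(B+S)`, always cheating is the
submitter's strict best response. -/
theorem submitter_best_response (B S C : ℝ) (hBS : 0 < B + S) (hBC : 0 < B + C)
    (q_v : ℝ) :
    ((B + C) / (B + S) < q_v →
      ∀ q_c ∈ Set.Ioc (0 : ℝ) 1, U_S B S C q_v q_c < U_S B S C q_v 0) ∧
    (q_v < (B + C) / (B + S) →
      ∀ q_c ∈ Set.Ico (0 : ℝ) 1, U_S B S C q_v q_c < U_S B S C q_v 1) := by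
  constructor
  · intro h q_c ⟨h0, h1⟩
    rw [div_lt_iff₀ hBS] at h
    simp only [U_S]
    nlinarith
  · intro h q_c ⟨h0, h1⟩
    rw [lt_div_iff₀ hBS] at h
    simp only [U_S]
    nlinarith
end
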